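/- Let K be a number field with ring of integers O_K, k > 0, ε ∈ O_K^× a unit of infinite order with |ι(ε)|_j ≠ 1 for every 1 ≤ j ≤ r₁+r₂, and let T₁,…,T_t be compact subsets of the mixed space E. Suppose: (1) there exist β₁,…,β_t ∈ O_K such that for every 1 ≤ j ≤ t and every ξ ∈ T_j, either there exists γ ∈ O_K with N(ι(ε)·ξ − ι(β_j) − ι(γ)) < k, or ι(ε)·ξ − ι(β_j) ∈ T_{j+1} (indices mod t, with T_{t+1} = T₁); and (2) for every j there is an index π(j) such that for every ξ ∈ T_j there exists γ ∈ O_K with either N(ι(ε)⁻¹·ξ − ι(γ) − ι(δ)) < k for some δ ∈ O_K, or ι(ε)⁻¹·ξ − ι(γ) ∈ T_{π(j)}. Then every k-exceptional point of T₁ equals ζ = ι(β)/(ι(ε)ᵗ − 1), where β = ε^{t−1}β₁ + ε^{t−2}β₂ + ⋯ + εβ_{t−1} + β_t ∈ O_K; moreover for every j, every k-exceptional point of T_j lies in the set {ι(ε)ᵐ·ζ − ι(γ) : m ∈ ℤ, γ ∈ O_K}. -/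

import Mathlib

/-!
Let `ζⱼ` be the fixed point of the affine map `y ↦ ι(ε)ᵗ y - ι(cⱼ)` obtained by composing the `t`
steps of (1) starting from `Tⱼ`. Maps `x ↦ ι(u) x - ι(α)` with `u` a unit preserve
`k`-exceptionality, so by (1) the `t`-step iterates of an exceptional point `x ∈ Tⱼ` stay in `Tⱼ`,
and they equal `ζⱼ + ι(ε)^{tm} (x - ζⱼ)`. Boundedness forces `x = ζⱼ` at every place where
`|ε| > 1`.

At the places where `|ε| < 1` one runs backwards with (2). If two exceptional points `x, x'` agree
at the expanding places, their backward orbits `ι(ε)⁻ⁿ x - ι(dₙ)` and `ι(ε)⁻ⁿ x' - ι(d'ₙ)` are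
again exceptional, so at an expanding place `dₙ - d'ₙ ∈ 𝓞 K` is determined by the pair of sets
containing the two orbit points. By pigeonhole `dₙ - d'ₙ` is constant along infinitely many `n`,
and then `ι(ε)⁻ⁿ (x - x')` is bounded along them, so `x = x'` at the contracting places too.
Applied to `x ∈ T₁` and its `t`-step image this gives `x = ι(ε)ᵗ x - ι(β)`, i.e. `x = ζ`.
-/

open NumberField NumberField.InfinitePlace NumberField.mixedEmbedding Finset

theorem exists_seq_of_forall_exists_succ {α : Type*} {P : ℕ → α → Prop} {a : α} (h₀ : P 0 a)
    (h : ∀ n a, P n a → ∃ b, P (n + 1) b) : ∃ f : ℕ → α, ∀ n, P n (f n) := by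
  have : Nonempty α := ⟨a⟩
  choose! g hg using h
  refine ⟨fun n => Nat.rec a g n, fun n => ?_⟩
  induction n with
  | zero => exact h₀
  | succ n ih => exact hg n _ ih

theorem NumberField.Units.exists_one_lt_place {K : Type*} [Field K] [NumberField K]
    (u : (𝓞 K)ˣ) (hu : ∀ w : InfinitePlace K, w u ≠ 1) : ∃ w : InfinitePlace K, 1 < w u := by
  by_contra! h
  have hlt : ∏ w : InfinitePlace K, w u ^ w.mult < ∏ _w : InfinitePlace K, (1 : ℝ) :=
    prod_lt_prod_of_nonempty (fun w _ => pow_pos (Units.pos_at_place u w) _)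
      (fun w _ => pow_lt_one₀ (Units.pos_at_place u w).le ((h w).lt_of_ne (hu w)) mult_ne_zero)
      univ_nonempty
  rw [prod_eq_abs_norm, Units.norm, prod_const_one] at hlt
  norm_num at hlt

namespace NumberField.mixedEmbedding

variable {K : Type*} [Field K]

local notation "ι" => mixedEmbedding K

def kerNormAtPlace (w : InfinitePlace K) : Ideal (mixedSpace K) where
  carrier := {x | normAtPlace w x = 0}
  zero_mem' := map_zero _
  add_mem' {x y} (hx : normAtPlace w x = 0) (hy : normAtPlace w y = 0) :=
    le_antisymm ((normAtPlace_add_le w x y).trans_eq (by rw [hx, hy, add_zero]))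
      (normAtPlace_nonneg w _)
  smul_mem' c x (hx : normAtPlace w x = 0) := by simp [smul_eq_mul, hx]

theorem mem_kerNormAtPlace {w : InfinitePlace K} {x : mixedSpace K} :
    x ∈ kerNormAtPlace w ↔ normAtPlace w x = 0 := Iff.rfl

theorem mixedEmbedding_mem_kerNormAtPlace {w : InfinitePlace K} {x : K} :
    mixedEmbedding K x ∈ kerNormAtPlace w ↔ x = 0 := by
  rw [mem_kerNormAtPlace, normAtPlace_apply, map_eq_zero]

theorem normAtPlace_eq_of_sub_mem {w : InfinitePlace K} {x y : mixedSpace K}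
    (h : x - y ∈ kerNormAtPlace w) : normAtPlace w x = normAtPlace w y := by
  have h₁ := normAtPlace_add_le w (x - y) y
  have h₂ := normAtPlace_add_le w (y - x) x
  rw [sub_add_cancel] at h₁ h₂
  rw [← neg_sub, normAtPlace_neg, mem_kerNormAtPlace.mp h] at h₂
  rw [mem_kerNormAtPlace.mp h] at h₁
  linarith

theorem isUnit_of_forall_normAtPlace_ne_zero {x : mixedSpace K}
    (h : ∀ w, normAtPlace w x ≠ 0) : IsUnit x := by
  rw [Prod.isUnit_iff, Pi.isUnit_iff, Pi.isUnit_iff]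
  refine ⟨fun w => isUnit_iff_ne_zero.mpr ?_, fun w => isUnit_iff_ne_zero.mpr ?_⟩
  · rw [← norm_ne_zero_iff, ← normAtPlace_apply_of_isReal w.prop]; exact h w
  · rw [← norm_ne_zero_iff, ← normAtPlace_apply_of_isComplex w.prop]; exact h w

theorem isUnit_pow_sub_one {a : mixedSpace K} (ha : ∀ w, normAtPlace w a ≠ 1) {n : ℕ}
    (hn : n ≠ 0) : IsUnit (a ^ n - 1) := by
  refine isUnit_of_forall_normAtPlace_ne_zero fun w h => ha w ?_
  have := normAtPlace_eq_of_sub_mem (w := w) h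
  rw [map_pow, map_one] at this
  exact (pow_eq_one_iff_of_nonneg (normAtPlace_nonneg w a) hn).mp this

theorem exists_pow_mul_sub_mem_of_forall_exists {I : Type*} {S : I → Set (mixedSpace K)}
    {u : 𝓞 K} (h : ∀ j, ∀ x ∈ S j, ∃ (i : I) (γ : 𝓞 K), ι (u : K) * x - ι γ ∈ S i) {i : I}
    {x : mixedSpace K} (hx : x ∈ S i) :
    ∃ (j : ℕ → I) (d : ℕ → 𝓞 K), ∀ n, ι (u : K) ^ n * x - ι (d n) ∈ S (j n) := by
  have hstep : ∀ n (s : I × 𝓞 K), ι (u : K) ^ n * x - ι s.2 ∈ S s.1 →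
      ∃ s' : I × 𝓞 K, ι (u : K) ^ (n + 1) * x - ι s'.2 ∈ S s'.1 := by
    intro n s hs
    obtain ⟨i', γ, h⟩ := h _ _ hs
    refine ⟨(i', u * s.2 + γ), ?_⟩
    convert h using 1
    push_cast [map_add, map_mul]
    ring
  obtain ⟨f, hf⟩ := exists_seq_of_forall_exists_succ (a := (i, 0)) (by simpa using hx) hstep
  exact ⟨fun n => (f n).1, fun n => (f n).2, hf⟩

variable [NumberField K]

open scoped Classical

theorem normAtPlace_le_norm (w : InfinitePlace K) (x : mixedSpace K) : normAtPlace w x ≤ ‖x‖ := by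
  rw [norm_eq_sup'_normAtPlace]
  exact le_sup' (fun w => normAtPlace w x) (mem_univ w)

theorem mem_kerNormAtPlace_of_forall_norm_pow_mul_le {w : InfinitePlace K} {a v : mixedSpace K}
    (ha : 1 < normAtPlace w a) {N : Set ℕ} (hN : N.Infinite) {R : ℝ}
    (hR : ∀ n ∈ N, ‖a ^ n * v‖ ≤ R) : v ∈ kerNormAtPlace w := by
  by_contra hv
  have hpos : 0 < normAtPlace w v := (normAtPlace_nonneg w v).lt_of_ne' hv
  obtain ⟨m, hm⟩ := pow_unbounded_of_one_lt (R / normAtPlace w v) ha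
  obtain ⟨n, hn, hmn⟩ := hN.exists_gt m
  have hle : normAtPlace w a ^ n * normAtPlace w v ≤ R := by
    simpa only [map_mul, map_pow] using (normAtPlace_le_norm w _).trans (hR n hn)
  rw [div_lt_iff₀ hpos] at hm
  nlinarith [pow_le_pow_right₀ ha.le hmn.le]

def IsExceptional (k : ℝ) (x : mixedSpace K) : Prop :=
  ∀ γ : 𝓞 K, k ≤ mixedEmbedding.norm (x - ι γ)

theorem IsExceptional.unit_mul_sub {k : ℝ} {x : mixedSpace K} (hx : IsExceptional k x)
    (u : (𝓞 K)ˣ) (α : 𝓞 K) : IsExceptional k (ι (u : K) * x - ι α) := by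
  intro γ
  have hu : ι (u : K) * ι ((u⁻¹ : (𝓞 K)ˣ) : K) = 1 := by simp [← map_mul]
  have : ι (u : K) * x - ι α - ι γ = ι (u : K) * (x - ι ((u⁻¹ : (𝓞 K)ˣ) * (α + γ) : 𝓞 K)) := by
    push_cast [map_mul, map_add]
    linear_combination (ι α + ι γ) * hu
  rw [this, map_mul, norm_unit, one_mul]
  exact hx _

end NumberField.mixedEmbedding

section orbitShift

open Fin.NatCast

def orbitShift {R : Type*} [CommSemiring R] {t : ℕ} [NeZero t] (a : R) (b : Fin t → R)
    (j : Fin t) (n : ℕ) : R :=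
  ∑ i ∈ range n, a ^ (n - 1 - i) * b (j + i)

variable {R : Type*} [CommSemiring R] {t : ℕ} [NeZero t] (a : R) (b : Fin t → R)

theorem orbitShift_zero (j : Fin t) : orbitShift a b j 0 = 0 := rfl

theorem orbitShift_succ (j : Fin t) (n : ℕ) :
    orbitShift a b j (n + 1) = a * orbitShift a b j n + b (j + n) := by
  rw [orbitShift, sum_range_succ, orbitShift, mul_sum, Nat.add_sub_cancel, Nat.sub_self, pow_zero,
    one_mul]
  congr 1
  refine sum_congr rfl fun i hi => ?_
  rw [← mul_assoc, ← pow_succ']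
  congr 2
  have := mem_range.mp hi
  omega

theorem orbitShift_zero_self : orbitShift a b 0 t = ∑ i : Fin t, a ^ (t - 1 - i) * b i := by
  rw [orbitShift, ← Fin.sum_univ_eq_sum_range]
  simp

end orbitShift

section CyclicSystem

open scoped Classical
open Fin.NatCast

variable {K : Type*} [Field K] {ε : (𝓞 K)ˣ} {t : ℕ} [NeZero t]
  {β : Fin t → 𝓞 K} {S : Fin t → Set (mixedSpace K)}

local notation "ι" => mixedEmbedding K

variable (hε : ∀ w : InfinitePlace K, w (ε : K) ≠ 1)
  (hfwd : ∀ j, ∀ x ∈ S j,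
    mixedEmbedding K (ε : K) * x - mixedEmbedding K (β j : K) ∈ S (j + 1))
  (hbwd : ∀ j, ∀ x ∈ S j, ∃ (i : Fin t) (γ : 𝓞 K),
    mixedEmbedding K ((ε⁻¹ : (𝓞 K)ˣ) : K) * x - mixedEmbedding K (γ : K) ∈ S i)
  (hS : Bornology.IsBounded (⋃ j, S j))

include hε in
theorem isUnit_mixedEmbedding_pow_sub_one : IsUnit (ι (ε : K) ^ t - 1) :=
  isUnit_pow_sub_one (fun w => by rw [normAtPlace_apply]; exact hε w) (NeZero.ne t)

variable (ε β) in
noncomputable def cycleFixedPoint (j : Fin t) : mixedSpace K :=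
  ι (orbitShift (ε : 𝓞 K) β j t : 𝓞 K) / (ι (ε : K) ^ t - 1)

include hε in
theorem cycleFixedPoint_mul (j : Fin t) :
    cycleFixedPoint ε β j * (ι (ε : K) ^ t - 1) = ι (orbitShift (ε : 𝓞 K) β j t : 𝓞 K) :=
  (isUnit_mixedEmbedding_pow_sub_one hε).div_mul_cancel _

include hfwd in
theorem pow_mul_sub_orbitShift_mem {j : Fin t} {x : mixedSpace K} (hx : x ∈ S j) (n : ℕ) :
    ι (ε : K) ^ n * x - ι (orbitShift (ε : 𝓞 K) β j n : 𝓞 K) ∈ S (j + n) := by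
  induction n with
  | zero => simpa [orbitShift_zero] using hx
  | succ n ih =>
    rw [Nat.cast_succ, ← add_assoc]
    convert hfwd _ _ ih using 1
    push_cast [orbitShift_succ, map_add, map_mul]
    ring

variable [NumberField K]

include hε hfwd hS in
theorem sub_cycleFixedPoint_mem_kerNormAtPlace {j : Fin t} {x : mixedSpace K} (hx : x ∈ S j)
    {w : InfinitePlace K} (hw : 1 < w (ε : K)) :
    x - cycleFixedPoint ε β j ∈ kerNormAtPlace w := by
  set ζ := cycleFixedPoint ε β j
  set F : mixedSpace K → mixedSpace K :=
    fun y => ι (ε : K) ^ t * y - ι (orbitShift (ε : 𝓞 K) β j t : 𝓞 K)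
  have hF : Set.MapsTo F (S j) (S j) := fun y hy => by
    simpa using pow_mul_sub_orbitShift_mem hfwd hy t
  have hFζ : ∀ m, F^[m] x - ζ = (ι (ε : K) ^ t) ^ m * (x - ζ) := by
    intro m
    induction m with
    | zero => simp
    | succ m ih =>
      rw [Function.iterate_succ_apply', pow_succ', mul_assoc, ← ih]
      linear_combination cycleFixedPoint_mul (β := β) hε j
  obtain ⟨R, hR⟩ := isBounded_iff_forall_norm_le.mp hS
  refine mem_kerNormAtPlace_of_forall_norm_pow_mul_le (a := ι (ε : K) ^ t) ?_ Set.infinite_univ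
    (R := R + ‖ζ‖) fun m _ => ?_
  · rw [map_pow, normAtPlace_apply]
    exact one_lt_pow₀ hw (NeZero.ne t)
  · rw [← hFζ]
    exact (norm_sub_le _ _).trans
      (add_le_add_left (hR _ (Set.mem_iUnion_of_mem j (hF.iterate m hx))) _)

include hε hfwd hS in
theorem exists_infinite_setOf_sub_eq {x x' : mixedSpace K}
    (hxx' : ∀ w : InfinitePlace K, 1 < w (ε : K) → x - x' ∈ kerNormAtPlace w)
    {j j' : ℕ → Fin t} {d d' : ℕ → 𝓞 K}
    (hy : ∀ n, ι ((ε⁻¹ : (𝓞 K)ˣ) : K) ^ n * x - ι (d n) ∈ S (j n))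
    (hy' : ∀ n, ι ((ε⁻¹ : (𝓞 K)ˣ) : K) ^ n * x' - ι (d' n) ∈ S (j' n)) :
    ∃ D : 𝓞 K, {n | d n - d' n = D}.Infinite := by
  obtain ⟨w, hw⟩ := Units.exists_one_lt_place ε hε
  -- at a place where `|ε| > 1`, the difference `d n - d' n` only depends on `(j n, j' n)`
  have hmem : ∀ n, ι (d n - d' n : 𝓞 K) -
      (cycleFixedPoint ε β (j' n) - cycleFixedPoint ε β (j n)) ∈ kerNormAtPlace w := by
    intro n
    convert Ideal.add_mem _ (Ideal.sub_mem _
      (Ideal.mul_mem_left _ (ι ((ε⁻¹ : (𝓞 K)ˣ) : K) ^ n) (hxx' w hw))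
      (sub_cycleFixedPoint_mem_kerNormAtPlace hε hfwd hS (hy n) hw))
      (sub_cycleFixedPoint_mem_kerNormAtPlace hε hfwd hS (hy' n) hw) using 1
    push_cast [map_sub]
    ring
  obtain ⟨P, hP⟩ := Finite.exists_infinite_fiber fun n => (j n, j' n)
  have hfiber := Set.infinite_coe_iff.mp hP
  obtain ⟨n₀, hn₀⟩ := hfiber.nonempty
  refine ⟨d n₀ - d' n₀, hfiber.mono fun n hn => ?_⟩
  obtain ⟨hj, hj'⟩ := Prod.mk.inj (hn.trans hn₀.symm)
  have := (kerNormAtPlace w).sub_mem (hmem n) (hmem n₀)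
  rw [hj, hj', sub_sub_sub_cancel_right, ← map_sub, mixedEmbedding_mem_kerNormAtPlace,
    sub_eq_zero] at this
  exact RingOfIntegers.coe_injective this

include hε hfwd hbwd hS in
theorem eq_of_forall_one_lt_sub_mem {i i' : Fin t} {x x' : mixedSpace K} (hx : x ∈ S i)
    (hx' : x' ∈ S i')
    (hxx' : ∀ w : InfinitePlace K, 1 < w (ε : K) → x - x' ∈ kerNormAtPlace w) : x = x' := by
  obtain ⟨j, d, hy⟩ := exists_pow_mul_sub_mem_of_forall_exists hbwd hx
  obtain ⟨j', d', hy'⟩ := exists_pow_mul_sub_mem_of_forall_exists hbwd hx'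
  obtain ⟨D, hD⟩ := exists_infinite_setOf_sub_eq hε hfwd hS hxx' hy hy'
  obtain ⟨R, hR⟩ := isBounded_iff_forall_norm_le.mp hS
  rw [← sub_eq_zero, ← forall_normAtPlace_eq_zero_iff]
  intro w
  rcases (hε w).lt_or_gt with hsmall | hbig
  · refine mem_kerNormAtPlace_of_forall_norm_pow_mul_le (a := ι ((ε⁻¹ : (𝓞 K)ˣ) : K)) ?_ hD
      (R := R + R + ‖ι (D : K)‖) fun n (hn : d n - d' n = D) => ?_
    · rw [normAtPlace_apply, map_units_inv, map_inv₀]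
      exact one_lt_inv₀ (Units.pos_at_place ε w) |>.mpr hsmall
    · have hdiff : ι ((ε⁻¹ : (𝓞 K)ˣ) : K) ^ n * (x - x') =
          (ι ((ε⁻¹ : (𝓞 K)ˣ) : K) ^ n * x - ι (d n)) -
            (ι ((ε⁻¹ : (𝓞 K)ˣ) : K) ^ n * x' - ι (d' n)) + ι (D : K) := by
        rw [← hn]
        push_cast [map_sub]
        ring
      rw [hdiff]
      exact (norm_add_le _ _).trans <| add_le_add_left ((norm_sub_le _ _).trans <|
        add_le_add (hR _ (Set.mem_iUnion_of_mem _ (hy n)))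
          (hR _ (Set.mem_iUnion_of_mem _ (hy' n)))) _
  · exact hxx' w hbig

include hε hfwd hbwd hS in
theorem eq_cycleFixedPoint_zero {x : mixedSpace K} (hx : x ∈ S 0) : x = cycleFixedPoint ε β 0 := by
  have hx' : ι (ε : K) ^ t * x - ι (orbitShift (ε : 𝓞 K) β 0 t : 𝓞 K) ∈ S 0 := by
    simpa using pow_mul_sub_orbitShift_mem hfwd hx t
  have hfix := eq_of_forall_one_lt_sub_mem hε hfwd hbwd hS hx hx' fun w hw => by
    convert Ideal.sub_mem _ (sub_cycleFixedPoint_mem_kerNormAtPlace hε hfwd hS hx hw)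
      (sub_cycleFixedPoint_mem_kerNormAtPlace hε hfwd hS hx' hw) using 1
    ring
  rw [cycleFixedPoint, (isUnit_mixedEmbedding_pow_sub_one hε).eq_div_iff]
  linear_combination -hfix

include hε hfwd hbwd hS in
theorem exists_eq_zpow_mul_cycleFixedPoint_sub {j : Fin t} {x : mixedSpace K} (hx : x ∈ S j) :
    ∃ (m : ℤ) (γ : 𝓞 K), x = ι ((ε : K) ^ m) * cycleFixedPoint ε β 0 - ι γ := by
  obtain ⟨n, hjn⟩ : ∃ n : ℕ, j + (n : Fin t) = 0 := ⟨t - j, by ext; simp [Fin.val_add]⟩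
  have hy := pow_mul_sub_orbitShift_mem hfwd hx n
  rw [hjn] at hy
  refine ⟨-n, -((ε ^ (-(n : ℤ)) : (𝓞 K)ˣ) * orbitShift (ε : 𝓞 K) β j n), ?_⟩
  have hinv : ι ((ε : K) ^ (-(n : ℤ))) * ι (ε : K) ^ n = 1 := by
    rw [← map_pow, ← map_mul, zpow_neg, zpow_natCast, inv_mul_cancel₀ (pow_ne_zero _
      (Units.coe_ne_zero ε)), map_one]
  rw [← eq_cycleFixedPoint_zero hε hfwd hbwd hS hy]
  push_cast [map_neg, map_mul, Units.coe_zpow]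
  linear_combination (-x) * hinv

end CyclicSystem

theorem stmt_4_general (K : Type*) [Field K] [NumberField K]
    (k : ℝ)
    (ε : (𝓞 K)ˣ)
    (hεabs : (∀ w : {w : InfinitePlace K // IsReal w},
        |(mixedEmbedding K (ε : K)).1 w| ≠ 1) ∧
      (∀ w : {w : InfinitePlace K // IsComplex w},
        ‖(mixedEmbedding K (ε : K)).2 w‖ ≠ 1))
    (t : ℕ) [NeZero t]
    (T : Fin t → Set (mixedEmbedding.mixedSpace K)) (hT : ∀ j, IsCompact (T j))
    (β : Fin t → 𝓞 K)
    (h1 : ∀ (j : Fin t), ∀ ξ ∈ T j,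
      (∃ γ : 𝓞 K, mixedEmbedding.norm
          (mixedEmbedding K (ε : K) * ξ - mixedEmbedding K (β j : K)
            - mixedEmbedding K (γ : K)) < k) ∨
      mixedEmbedding K (ε : K) * ξ - mixedEmbedding K (β j : K) ∈ T (j + 1))
    (π : Fin t → Fin t)
    (h2 : ∀ (j : Fin t), ∀ ξ ∈ T j, ∃ γ : 𝓞 K,
      (∃ δ : 𝓞 K, mixedEmbedding.norm
          (mixedEmbedding K ((ε⁻¹ : (𝓞 K)ˣ) : K) * ξ - mixedEmbedding K (γ : K)
            - mixedEmbedding K (δ : K)) < k) ∨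
      mixedEmbedding K ((ε⁻¹ : (𝓞 K)ˣ) : K) * ξ - mixedEmbedding K (γ : K) ∈ T (π j)) :
    (∀ ξ₀ ∈ T 0,
      (∀ γ : 𝓞 K, k ≤ mixedEmbedding.norm (ξ₀ - mixedEmbedding K (γ : K))) →
      ξ₀ = mixedEmbedding K ((∑ j : Fin t, (ε : 𝓞 K) ^ (t - 1 - (j : ℕ)) * β j : 𝓞 K) : K)
        / (mixedEmbedding K (ε : K) ^ t - 1)) ∧
    (∀ (j : Fin t), ∀ ξ ∈ T j,
      (∀ γ : 𝓞 K, k ≤ mixedEmbedding.norm (ξ - mixedEmbedding K (γ : K))) →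
      ∃ (m : ℤ) (γ : 𝓞 K),
        ξ = mixedEmbedding K ((ε : K) ^ m) *
            (mixedEmbedding K ((∑ j : Fin t, (ε : 𝓞 K) ^ (t - 1 - (j : ℕ)) * β j : 𝓞 K) : K)
              / (mixedEmbedding K (ε : K) ^ t - 1))
          - mixedEmbedding K (γ : K)) := by
  have hε : ∀ w : InfinitePlace K, w (ε : K) ≠ 1 := fun w => by
    rw [← normAtPlace_apply]
    rcases isReal_or_isComplex w with hw | hw
    · rw [normAtPlace_apply_of_isReal hw, Real.norm_eq_abs]
      exact hεabs.1 ⟨w, hw⟩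
    · rw [normAtPlace_apply_of_isComplex hw]
      exact hεabs.2 ⟨w, hw⟩
  set S : Fin t → Set (mixedSpace K) := fun j => T j ∩ {x | IsExceptional k x}
  have hS : Bornology.IsBounded (⋃ j, S j) := by
    classical
    exact (isCompact_iUnion hT).isBounded.subset (Set.iUnion_mono fun _ => Set.inter_subset_left)
  have hfwd : ∀ j, ∀ x ∈ S j,
      mixedEmbedding K (ε : K) * x - mixedEmbedding K (β j : K) ∈ S (j + 1) := by
    rintro j x ⟨hx, hex⟩
    have hex' := hex.unit_mul_sub ε (β j)
    exact ⟨(h1 j x hx).resolve_left fun ⟨γ, hγ⟩ => (hex' γ).not_gt hγ, hex'⟩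
  have hbwd : ∀ j, ∀ x ∈ S j, ∃ (i : Fin t) (γ : 𝓞 K),
      mixedEmbedding K ((ε⁻¹ : (𝓞 K)ˣ) : K) * x - mixedEmbedding K (γ : K) ∈ S i := by
    rintro j x ⟨hx, hex⟩
    obtain ⟨γ, hγ⟩ := h2 j x hx
    have hex' := hex.unit_mul_sub ε⁻¹ γ
    exact ⟨π j, γ, hγ.resolve_left fun ⟨δ, hδ⟩ => (hex' δ).not_gt hδ, hex'⟩
  rw [← orbitShift_zero_self]
  exact ⟨fun x hx hex => eq_cycleFixedPoint_zero hε hfwd hbwd hS ⟨hx, hex⟩,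
    fun j x hx hex => exists_eq_zpow_mul_cycleFixedPoint_sub hε hfwd hbwd hS ⟨hx, hex⟩⟩

/-- The cyclic version of Cassels' theorem: if `ι ε` permutes the compact sets
`T₁, …, T_t` cyclically (up to translations by `ι β_j` and up to `k`-covered
regions) and `ι ε⁻¹` maps each `T_j` into some `T_{π(j)}` (up to translations
and `k`-covered regions), and no archimedean absolute value of `ε` is `1`, then
the only possible `k`-exceptional point of `T₁` is
`ζ = ι β / (ι ε ^ t - 1)` with `β = ε^{t-1} β₁ + ⋯ + β_t`, and every
`k`-exceptional point of any `T_j` lies in `{ι ε ^ m · ζ - ι γ}`. -/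
theorem stmt_4 (K : Type*) [Field K] [NumberField K]
    (k : ℝ) (hk : 0 < k)
    (ε : (𝓞 K)ˣ) (hε : ¬ IsOfFinOrder ε)
    (hεabs : (∀ w : {w : InfinitePlace K // IsReal w},
        |(mixedEmbedding K (ε : K)).1 w| ≠ 1) ∧
      (∀ w : {w : InfinitePlace K // IsComplex w},
        ‖(mixedEmbedding K (ε : K)).2 w‖ ≠ 1))
    (t : ℕ) [NeZero t]
    (T : Fin t → Set (mixedEmbedding.mixedSpace K)) (hT : ∀ j, IsCompact (T j))
    (β : Fin t → 𝓞 K)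
    (h1 : ∀ (j : Fin t), ∀ ξ ∈ T j,
      (∃ γ : 𝓞 K, mixedEmbedding.norm
          (mixedEmbedding K (ε : K) * ξ - mixedEmbedding K (β j : K)
            - mixedEmbedding K (γ : K)) < k) ∨
      mixedEmbedding K (ε : K) * ξ - mixedEmbedding K (β j : K) ∈ T (j + 1))
    (π : Fin t → Fin t)
    (h2 : ∀ (j : Fin t), ∀ ξ ∈ T j, ∃ γ : 𝓞 K,
      (∃ δ : 𝓞 K, mixedEmbedding.norm
          (mixedEmbedding K ((ε⁻¹ : (𝓞 K)ˣ) : K) * ξ - mixedEmbedding K (γ : K)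
            - mixedEmbedding K (δ : K)) < k) ∨
      mixedEmbedding K ((ε⁻¹ : (𝓞 K)ˣ) : K) * ξ - mixedEmbedding K (γ : K) ∈ T (π j)) :
    (∀ ξ₀ ∈ T 0,
      (∀ γ : 𝓞 K, k ≤ mixedEmbedding.norm (ξ₀ - mixedEmbedding K (γ : K))) →
      ξ₀ = mixedEmbedding K ((∑ j : Fin t, (ε : 𝓞 K) ^ (t - 1 - (j : ℕ)) * β j : 𝓞 K) : K)
        / (mixedEmbedding K (ε : K) ^ t - 1)) ∧
    (∀ (j : Fin t), ∀ ξ ∈ T j,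
      (∀ γ : 𝓞 K, k ≤ mixedEmbedding.norm (ξ - mixedEmbedding K (γ : K))) →
      ∃ (m : ℤ) (γ : 𝓞 K),
        ξ = mixedEmbedding K ((ε : K) ^ m) *
            (mixedEmbedding K ((∑ j : Fin t, (ε : 𝓞 K) ^ (t - 1 - (j : ℕ)) * β j : 𝓞 K) : K)
              / (mixedEmbedding K (ε : K) ^ t - 1))
          - mixedEmbedding K (γ : K)) :=
  stmt_4_general K k ε hεabs t T hT β h1 π h2
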